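/- arXiv:hep-th/0112074 — 8 statements merged into one kernel-verified Lean document; each statement's English description precedes it below -/
import Mathlib

section
/- In the second class setting, the kernel of the Dirac bivector is exactly the span of the constraints: for ξ ∈ V*, one has Π_D(ξ, β) = 0 for all β ∈ V* if and only if ξ lies in the linear span of Φ^1, …, Φ^d. In particular each constraint Φ^a is a Casimir of the Dirac bracket, Π_D(Φ^a, ·) = 0. -/
/-- In the second class setting (symplectic `(V, ω)`, Hamiltonian-vector
map `X`, Poisson bivector `Π(α,β) = α (X β)`, linearly independent constraints
`Φ : Fin d → V*` with invertible matrix `F a b = Π(Φ a, Φ b)` and inverse `G`), the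
kernel of the Dirac bivector
`Π_D(α,β) = Π(α,β) + Σ_{a,b} G a b * Π(α, Φ a) * Π(β, Φ b)`
is exactly the span of the constraints; in particular each `Φ a` is a Casimir. -/
theorem dirac_bivector_kernel_eq_span_of_constraints
    (V : Type*) [AddCommGroup V] [Module ℝ V] [FiniteDimensional ℝ V]
    (ω : V →ₗ[ℝ] V →ₗ[ℝ] ℝ)
    (halt : ∀ v, ω v v = 0)
    (hnd : ∀ v, (∀ w, ω v w = 0) → v = 0)
    (X : Module.Dual ℝ V → V) (hX : ∀ α w, ω (X α) w = α w)
    (d : ℕ) (Φ : Fin d → Module.Dual ℝ V) (hΦ : LinearIndependent ℝ Φ)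
    (F G : Matrix (Fin d) (Fin d) ℝ)
    (hF : ∀ a b, F a b = (Φ a) (X (Φ b)))
    (hFG : F * G = 1) (hGF : G * F = 1) :
    (∀ ξ : Module.Dual ℝ V,
      (∀ β : Module.Dual ℝ V,
          ξ (X β) + ∑ a, ∑ b, G a b * ξ (X (Φ a)) * β (X (Φ b)) = 0) ↔
        ξ ∈ Submodule.span ℝ (Set.range Φ)) ∧
    (∀ (a : Fin d) (β : Module.Dual ℝ V),
      (Φ a) (X β) + ∑ c, ∑ b, G c b * (Φ a) (X (Φ c)) * β (X (Φ b)) = 0) := by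
  -- skew-symmetry of ω
  have skew : ∀ v w, ω v w = - ω w v := by
    intro v w
    have h := halt (v + w)
    simp only [map_add, LinearMap.add_apply, halt v, halt w] at h
    linarith
  -- antisymmetry of the Poisson bivector
  have anti : ∀ α β : Module.Dual ℝ V, α (X β) = - β (X α) := by
    intro α β
    rw [← hX α (X β), ← hX β (X α), skew]
  -- each constraint is a Casimir
  have casimir : ∀ (a : Fin d) (β : Module.Dual ℝ V),
      (Φ a) (X β) + ∑ c, ∑ b, G c b * (Φ a) (X (Φ c)) * β (X (Φ b)) = 0 := by
    intro a β
    have key : ∑ c, ∑ b, G c b * (Φ a) (X (Φ c)) * β (X (Φ b)) = β (X (Φ a)) := by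
      calc ∑ c, ∑ b, G c b * (Φ a) (X (Φ c)) * β (X (Φ b))
          = ∑ b, ∑ c, (F a c * G c b) * β (X (Φ b)) := by
            rw [Finset.sum_comm]
            refine Finset.sum_congr rfl fun b _ => Finset.sum_congr rfl fun c _ => ?_
            rw [hF]; ring
        _ = ∑ b, ((F * G) a b) * β (X (Φ b)) := by
            refine Finset.sum_congr rfl fun b _ => ?_
            rw [Matrix.mul_apply, Finset.sum_mul]
        _ = β (X (Φ a)) := by
            rw [hFG]
            simp [Matrix.one_apply]
    rw [key, anti]; ring
  -- surjectivity of X in the form needed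
  have hXv : ∀ v : V, X (ω v) = v := by
    intro v
    have h0 : ∀ w, ω (X (ω v) - v) w = 0 := by
      intro w
      simp [map_sub, hX (ω v) w]
    have := hnd _ h0
    rwa [sub_eq_zero] at this
  refine ⟨fun ξ => ⟨fun h => ?_, fun hmem β => ?_⟩, casimir⟩
  · -- kernel ⊆ span
    rw [Submodule.mem_span_range_iff_exists_fun]
    refine ⟨fun b => ∑ a, G a b * ξ (X (Φ a)), ?_⟩
    ext v
    have hβ := h (ω v)
    rw [hXv v] at hβ
    have hrw : ∀ b, (ω v) (X (Φ b)) = - Φ b v := by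
      intro b
      rw [skew, hX]
    simp only [hrw, mul_neg, Finset.sum_neg_distrib] at hβ
    have hA : ∑ b, (∑ a, G a b * ξ (X (Φ a))) * Φ b v
        = ∑ a, ∑ b, G a b * ξ (X (Φ a)) * Φ b v := by
      rw [Finset.sum_comm]
      exact Finset.sum_congr rfl fun b _ => Finset.sum_mul ..
    simp only [LinearMap.sum_apply, LinearMap.smul_apply, smul_eq_mul]
    linarith [hA, hβ]
  · -- span ⊆ kernel
    rw [Submodule.mem_span_range_iff_exists_fun] at hmem
    obtain ⟨c, rfl⟩ := hmem
    have h1 : ∀ α : Module.Dual ℝ V, (∑ i, c i • Φ i) (X α) = ∑ t, c t * Φ t (X α) := by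
      intro α
      simp [LinearMap.sum_apply, LinearMap.smul_apply, smul_eq_mul]
    have h2 : ∀ a b : Fin d, G a b * (∑ t, c t * Φ t (X (Φ a))) * β (X (Φ b))
        = ∑ t, c t * (G a b * Φ t (X (Φ a)) * β (X (Φ b))) := by
      intro a b
      rw [Finset.mul_sum, Finset.sum_mul]
      exact Finset.sum_congr rfl fun t _ => by ring
    simp only [h1, h2]
    have h3 : ∑ a, ∑ b, ∑ t, c t * (G a b * Φ t (X (Φ a)) * β (X (Φ b)))
        = ∑ t, ∑ a, ∑ b, c t * (G a b * Φ t (X (Φ a)) * β (X (Φ b))) :=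
      calc ∑ a, ∑ b, ∑ t, c t * (G a b * Φ t (X (Φ a)) * β (X (Φ b)))
          = ∑ a, ∑ t, ∑ b, c t * (G a b * Φ t (X (Φ a)) * β (X (Φ b))) :=
            Finset.sum_congr rfl fun a _ => Finset.sum_comm ..
        _ = ∑ t, ∑ a, ∑ b, c t * (G a b * Φ t (X (Φ a)) * β (X (Φ b))) :=
            Finset.sum_comm ..
    rw [h3]
    simp only [← Finset.mul_sum]
    rw [← Finset.sum_add_distrib]
    refine Finset.sum_eq_zero fun t _ => ?_
    rw [← mul_add, casimir t β, mul_zero]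
end

section
/- In the second class setting, V decomposes as the direct sum of the constraint subspace C := ⋂_{a=1}^d ker Φ^a and the span of the Hamiltonian vectors X_{Φ^1}, …, X_{Φ^d}, and the restriction of ω to C is nondegenerate. (The pointwise content of the statement that a second class constraint surface is a symplectic submanifold, with tangent space complemented by the constraint orbit directions.) -/
/-- In the second class setting, `V` decomposes as the direct sum of
the constraint subspace `C = ⋂ a, ker (Φ a)` and the span of the Hamiltonian
vectors `X (Φ a)`, and the restriction of `ω` to `C` is nondegenerate. -/
theorem constraint_subspace_complement_and_nondegenerate
    (V : Type*) [AddCommGroup V] [Module ℝ V] [FiniteDimensional ℝ V]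
    (ω : V →ₗ[ℝ] V →ₗ[ℝ] ℝ)
    (halt : ∀ v, ω v v = 0)
    (hnd : ∀ v, (∀ w, ω v w = 0) → v = 0)
    (X : Module.Dual ℝ V → V) (hX : ∀ α w, ω (X α) w = α w)
    (d : ℕ) (Φ : Fin d → Module.Dual ℝ V) (hΦ : LinearIndependent ℝ Φ)
    (F : Matrix (Fin d) (Fin d) ℝ)
    (hF : ∀ a b, F a b = (Φ a) (X (Φ b)))
    (hFinv : IsUnit F) :
    IsCompl (⨅ a, LinearMap.ker (Φ a))
        (Submodule.span ℝ (Set.range fun a => X (Φ a))) ∧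
    (∀ w ∈ (⨅ a, LinearMap.ker (Φ a)),
      (∀ w' ∈ (⨅ a, LinearMap.ker (Φ a)), ω w w' = 0) → w = 0) := by
  have hdet : IsUnit F.det := (Matrix.isUnit_iff_isUnit_det F).mp hFinv
  have hanti : ∀ v w, ω v w = - ω w v := by
    intro v w
    have h := halt (v + w)
    simp only [map_add, LinearMap.add_apply, halt] at h
    linarith
  -- Φ applied to a combination of Hamiltonian vectors is a matrix mulVec
  have hPhiSum : ∀ (c : Fin d → ℝ) (b : Fin d),
      Φ b (∑ a, c a • X (Φ a)) = F.mulVec c b := by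
    intro c b
    rw [map_sum, Matrix.mulVec]
    simp only [map_smul, smul_eq_mul, dotProduct]
    exact Finset.sum_congr rfl fun a _ => by rw [hF, mul_comm]
  have hmemC : ∀ w, w ∈ (⨅ a, LinearMap.ker (Φ a)) ↔ ∀ a, Φ a w = 0 := by
    intro w
    simp [Submodule.mem_iInf, LinearMap.mem_ker]
  -- Disjointness
  have hdisj : Disjoint (⨅ a, LinearMap.ker (Φ a))
      (Submodule.span ℝ (Set.range fun a => X (Φ a))) := by
    rw [Submodule.disjoint_def]
    intro v hvC hvS
    obtain ⟨c, hc⟩ := (Submodule.mem_span_range_iff_exists_fun ℝ).mp hvS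
    have hc0 : F.mulVec c = 0 := by
      funext b
      rw [← hPhiSum c b, hc]
      exact ((hmemC v).mp hvC) b
    have : (c : Fin d → ℝ) = 0 := by
      have := congrArg (F⁻¹.mulVec) hc0
      rwa [Matrix.mulVec_mulVec, Matrix.nonsing_inv_mul F hdet, Matrix.one_mulVec,
        Matrix.mulVec_zero] at this
    rw [← hc]
    simp [this]
  -- Codisjointness
  have hcodisj : Codisjoint (⨅ a, LinearMap.ker (Φ a))
      (Submodule.span ℝ (Set.range fun a => X (Φ a))) := by
    rw [codisjoint_iff_le_sup]
    intro v _
    set c : Fin d → ℝ := F⁻¹.mulVec (fun b => Φ b v) with hcdef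
    set s : V := ∑ a, c a • X (Φ a) with hsdef
    have hsS : s ∈ Submodule.span ℝ (Set.range fun a => X (Φ a)) :=
      Submodule.sum_mem _ fun a _ =>
        Submodule.smul_mem _ _ (Submodule.subset_span ⟨a, rfl⟩)
    have hvsC : v - s ∈ (⨅ a, LinearMap.ker (Φ a)) := by
      rw [hmemC]
      intro b
      rw [map_sub, hPhiSum c b, hcdef, Matrix.mulVec_mulVec,
        Matrix.mul_nonsing_inv F hdet, Matrix.one_mulVec]
      simp
    exact Submodule.mem_sup.mpr ⟨v - s, hvsC, s, hsS, by abel⟩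
  refine ⟨⟨hdisj, hcodisj⟩, ?_⟩
  -- Nondegeneracy on C
  intro w hwC hw'
  apply hnd
  intro u
  obtain ⟨y, hy, z, hz, rfl⟩ := Submodule.mem_sup.mp
    ((codisjoint_iff_le_sup.mp hcodisj) (Submodule.mem_top (x := u)))
  have hωz : ω w z = 0 := by
    obtain ⟨c, hc⟩ := (Submodule.mem_span_range_iff_exists_fun ℝ).mp hz
    rw [← hc, map_sum]
    refine Finset.sum_eq_zero fun a _ => ?_
    rw [map_smul, smul_eq_mul]
    have : ω w (X (Φ a)) = 0 := by
      rw [hanti, hX]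
      simp [(hmemC w).mp hwC a]
    rw [this, mul_zero]
  rw [map_add, hw' y hy, hωz, add_zero]
end

section
/- In the second class setting, let p : V → V be the projection onto the constraint subspace C := ⋂_{a=1}^d ker Φ^a along its symplectic orthogonal C^⊥ (this projection exists since V = C ⊕ C^⊥). Then the Dirac bivector is the projection of the Poisson bivector: Π_D(α, β) = Π(α ∘ p, β ∘ p) for all α, β ∈ V*. (Remark (iii) of Section 4.1: Π_D^♯ = π₁ ∘ Π^♯ ∘ π̄₁, at a single point.) -/
/-- In the second class setting, let `p` be the projection of `V`
onto the constraint subspace `C = ⋂ a, ker (Φ a)` along its symplectic orthogonal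
`C^⊥`. Then the Dirac bivector is the projection of the Poisson bivector:
`Π_D(α, β) = Π(α ∘ p, β ∘ p)` for all covectors `α, β`. -/
theorem dirac_bivector_eq_projected_bivector
    (V : Type*) [AddCommGroup V] [Module ℝ V] [FiniteDimensional ℝ V]
    (ω : V →ₗ[ℝ] V →ₗ[ℝ] ℝ)
    (halt : ∀ v, ω v v = 0)
    (hnd : ∀ v, (∀ w, ω v w = 0) → v = 0)
    (X : Module.Dual ℝ V → V) (hX : ∀ α w, ω (X α) w = α w)
    (d : ℕ) (Φ : Fin d → Module.Dual ℝ V) (hΦ : LinearIndependent ℝ Φ)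
    (F G : Matrix (Fin d) (Fin d) ℝ)
    (hF : ∀ a b, F a b = (Φ a) (X (Φ b)))
    (hFG : F * G = 1) (hGF : G * F = 1)
    (p : V →ₗ[ℝ] V)
    (hp1 : ∀ v, p v ∈ (⨅ a, LinearMap.ker (Φ a)))
    (hp2 : ∀ v ∈ (⨅ a, LinearMap.ker (Φ a)), p v = v)
    (hp3 : ∀ v, ∀ w ∈ (⨅ a, LinearMap.ker (Φ a)), ω (v - p v) w = 0) :
    ∀ α β : Module.Dual ℝ V,
      α (X β) + ∑ a, ∑ b, G a b * α (X (Φ a)) * β (X (Φ b)) =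
        (α ∘ₗ p) (X (β ∘ₗ p)) := by
  intro α β
  set C := ⨅ a, LinearMap.ker (Φ a) with hC
  -- antisymmetry of ω
  have hanti : ∀ v w, ω v w = -ω w v := by
    intro v w
    have h := halt (v + w)
    simp only [map_add, LinearMap.add_apply] at h
    rw [halt v, halt w] at h
    linarith
  -- uniqueness of X
  have hXuniq : ∀ (γ : Module.Dual ℝ V) (v : V), (∀ w, ω v w = γ w) → v = X γ := by
    intro γ v h
    have h0 : ∀ w, ω (v - X γ) w = 0 := by
      intro w
      simp only [map_sub, LinearMap.sub_apply, h, hX]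
      ring
    exact sub_eq_zero.mp (hnd _ h0)
  -- membership in C
  have hCmem : ∀ v, v ∈ C ↔ ∀ a, Φ a v = 0 := by
    intro v
    simp [hC, Submodule.mem_iInf, LinearMap.mem_ker]
  -- each X (Φ a) is symplectically orthogonal to C
  have hXΦperp : ∀ a, ∀ w ∈ C, ω (X (Φ a)) w = 0 := by
    intro a w hw
    rw [hX]
    exact (hCmem w).mp hw a
  -- C ∩ C^⊥ = 0
  have hker : ∀ v, v ∈ C → (∀ w ∈ C, ω v w = 0) → v = 0 := by
    intro v hv hperp
    have hle : (⨅ a, LinearMap.ker (Φ a)) ≤ LinearMap.ker (ω v) := by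
      intro w hw
      exact hperp w hw
    obtain ⟨c, hc⟩ := (Submodule.mem_span_range_iff_exists_fun ℝ).1
      (mem_span_of_iInf_ker_le_ker hle)
    -- v = ∑ c i • X (Φ i)
    have hv2 : v = ∑ i, c i • X (Φ i) := by
      have : (∑ i, c i • X (Φ i)) = X (ω v) := by
        apply hXuniq
        intro w
        simp only [map_sum, map_smul, LinearMap.sum_apply, LinearMap.smul_apply, hX]
        have := congrArg (fun f : Module.Dual ℝ V => f w) hc
        simp only [LinearMap.sum_apply, LinearMap.smul_apply, smul_eq_mul] at this
        simpa using this
      rw [this]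
      exact hXuniq _ _ (fun w => rfl)
    -- F.mulVec c = 0
    have hFc : ∀ b, ∑ i, F b i * c i = 0 := by
      intro b
      have h0 : Φ b v = 0 := (hCmem v).mp hv b
      rw [hv2] at h0
      simp only [map_sum, map_smul, smul_eq_mul] at h0
      rw [← h0]
      apply Finset.sum_congr rfl
      intro i _
      rw [hF]; ring
    have hc0 : ∀ i, c i = 0 := by
      intro i
      have := congrArg (fun M => Matrix.mulVec M c i) hGF
      simp only [Matrix.one_mulVec] at this
      rw [← this]
      simp only [Matrix.mulVec, dotProduct, Matrix.mul_apply]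
      calc ∑ x, (∑ j, G i j * F j x) * c x
          = ∑ x, ∑ j, G i j * (F j x * c x) := by
            apply Finset.sum_congr rfl
            intro x _
            rw [Finset.sum_mul]
            exact Finset.sum_congr rfl fun j _ => by ring
        _ = ∑ j, G i j * ∑ x, F j x * c x := by
            rw [Finset.sum_comm]
            exact Finset.sum_congr rfl fun j _ => (Finset.mul_sum _ _ _).symm
        _ = 0 := by simp [hFc]
    rw [hv2]
    simp [hc0]
  -- the explicit formula for p (X β)
  set u : V := X β + ∑ a, (∑ b, G a b * β (X (Φ b))) • X (Φ a) with hu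
  have huC : u ∈ C := by
    rw [hCmem]
    intro e
    have hβΦ : β (X (Φ e)) = -Φ e (X β) := by
      rw [← hX β (X (Φ e)), hanti (X β) (X (Φ e)), hX]
    simp only [hu, map_add, map_sum, map_smul, smul_eq_mul]
    have : ∑ a, (∑ b, G a b * β (X (Φ b))) * Φ e (X (Φ a))
        = ∑ b, (∑ a, F e a * G a b) * β (X (Φ b)) := by
      calc ∑ a, (∑ b, G a b * β (X (Φ b))) * Φ e (X (Φ a))
          = ∑ a, ∑ b, F e a * G a b * β (X (Φ b)) := by
            apply Finset.sum_congr rfl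
            intro a _
            rw [Finset.sum_mul]
            apply Finset.sum_congr rfl
            intro b _
            rw [hF]; ring
        _ = ∑ b, (∑ a, F e a * G a b) * β (X (Φ b)) := by
            rw [Finset.sum_comm]
            apply Finset.sum_congr rfl
            intro b _
            rw [Finset.sum_mul]
    rw [this]
    have hFGe : ∀ b, ∑ a, F e a * G a b = if e = b then 1 else 0 := by
      intro b
      have := congrFun (congrFun hFG e) b
      simpa [Matrix.mul_apply, Matrix.one_apply] using this
    simp only [hFGe, ite_mul, one_mul, zero_mul]
    rw [Finset.sum_ite_eq]
    simp [hβΦ]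
  have hpu : p (X β) = u := by
    apply sub_eq_zero.mp
    apply hker _ (Submodule.sub_mem _ (hp1 (X β)) huC)
    intro z hz
    have h1 : ω (p (X β) - X β) z = 0 := by
      have := hp3 (X β) z hz
      rw [show p (X β) - X β = -(X β - p (X β)) by abel] at *
      simp only [map_neg, LinearMap.neg_apply]
      rw [this]; ring
    have h2 : ω (X β - u) z = 0 := by
      simp only [hu, map_sub, map_add, map_sum, map_smul, LinearMap.sub_apply,
        LinearMap.add_apply, LinearMap.sum_apply, LinearMap.smul_apply, smul_eq_mul]
      rw [Finset.sum_congr rfl (fun a _ => by rw [hXΦperp a z hz])]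
      simp
    have : p (X β) - u = (p (X β) - X β) + (X β - u) := by abel
    rw [this, map_add, LinearMap.add_apply, h1, h2]
    ring
  have hXβp : X (β ∘ₗ p) = p (X β) := by
    symm
    apply hXuniq
    intro w
    have h2 : ω (p (X β)) (w - p w) = 0 := by
      rw [hanti]
      rw [hp3 w (p (X β)) (hp1 (X β))]
      ring
    have h1 : ω (p (X β)) (p w) = β (p w) := by
      have h3 : ω (X β - p (X β)) (p w) = 0 := hp3 (X β) (p w) (hp1 w)
      simp only [map_sub, LinearMap.sub_apply] at h3
      have h4 : ω (X β) (p w) = β (p w) := hX β (p w)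
      linarith
    calc ω (p (X β)) w = ω (p (X β)) (p w) + ω (p (X β)) (w - p w) := by
          rw [← map_add]; congr 1; abel
      _ = β (p w) := by rw [h1, h2, add_zero]
      _ = (β ∘ₗ p) w := rfl
  rw [LinearMap.comp_apply, hXβp, hp2 _ (hp1 (X β)), hpu, hu]
  simp only [map_add, map_sum, map_smul, smul_eq_mul]
  congr 1
  apply Finset.sum_congr rfl
  intro a _
  rw [Finset.sum_mul]
  apply Finset.sum_congr rfl
  intro b _
  ring
end

section
/- In the second class setting, the Dirac bivector is compatible with the symplectic form on the constraint subspace: for all w, w' in C := ⋂_{a=1}^d ker Φ^a, one has Π_D(ω(w, ·), ω(w', ·)) = ω(w, w'). (The pointwise content of the paper's Proposition 5, that the Dirac bivector Π_D and the original symplectic form ω are compatible: on each leaf, Π_D induces exactly the pullback of ω.) -/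
/-- In the second class setting, the Dirac bivector is compatible
with the symplectic form on the constraint subspace `C = ⋂ a, ker (Φ a)`: for all
`w, w' ∈ C`, `Π_D(ω(w,·), ω(w',·)) = ω(w, w')`. -/
theorem dirac_bivector_compatible_on_constraint_subspace
    (V : Type*) [AddCommGroup V] [Module ℝ V] [FiniteDimensional ℝ V]
    (ω : V →ₗ[ℝ] V →ₗ[ℝ] ℝ)
    (halt : ∀ v, ω v v = 0)
    (hnd : ∀ v, (∀ w, ω v w = 0) → v = 0)
    (X : Module.Dual ℝ V → V) (hX : ∀ α w, ω (X α) w = α w)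
    (d : ℕ) (Φ : Fin d → Module.Dual ℝ V) (hΦ : LinearIndependent ℝ Φ)
    (F G : Matrix (Fin d) (Fin d) ℝ)
    (hF : ∀ a b, F a b = (Φ a) (X (Φ b)))
    (hFG : F * G = 1) (hGF : G * F = 1) :
    ∀ w w' : V, (∀ a, Φ a w = 0) → (∀ a, Φ a w' = 0) →
      (ω w) (X (ω w')) +
          ∑ a, ∑ b, G a b * (ω w) (X (Φ a)) * (ω w') (X (Φ b)) =
        ω w w' := by
  intro w w' hw hw'
  have skew : ∀ u v : V, ω u v = - ω v u := by
    intro u v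
    have h := halt (u + v)
    simp only [map_add, LinearMap.add_apply, halt] at h
    linarith
  have h1 : ∀ a, (ω w) (X (Φ a)) = 0 := by
    intro a
    rw [skew, hX]
    simp [hw a]
  have h2 : (ω w) (X (ω w')) = ω w w' := by
    rw [skew, hX, skew]; ring
  simp [h1, h2]
end

section
/- In the second class setting, define the presymplectic form ω̄ on V by ω̄(v, v') := ω(v, v') + Σ_{a,b} G_{ab} Φ^a(v) Φ^b(v'). Then ω̄ is alternating and its kernel is exactly the span of the Hamiltonian vectors of the constraints: ω̄(v, v') = 0 for all v' ∈ V if and only if v lies in the span of X_{Φ^1}, …, X_{Φ^d}. (The pointwise content of the paper's Corollary 1: the kernel of ω̄ = ω − φ*Ω_P is tangent to the orbits generated by the constraints.) -/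
/-- In the second class setting, the presymplectic form
`ω̄(v, v') := ω(v, v') + Σ_{a,b} G a b * Φ a v * Φ b v'` is alternating and its
kernel is exactly the span of the Hamiltonian vectors `X (Φ a)` of the
constraints. -/
theorem presymplectic_form_alternating_and_kernel_eq_span_of_hamiltonian_vectors
    (V : Type*) [AddCommGroup V] [Module ℝ V] [FiniteDimensional ℝ V]
    (ω : V →ₗ[ℝ] V →ₗ[ℝ] ℝ)
    (halt : ∀ v, ω v v = 0)
    (hnd : ∀ v, (∀ w, ω v w = 0) → v = 0)
    (X : Module.Dual ℝ V → V) (hX : ∀ α w, ω (X α) w = α w)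
    (d : ℕ) (Φ : Fin d → Module.Dual ℝ V) (hΦ : LinearIndependent ℝ Φ)
    (F G : Matrix (Fin d) (Fin d) ℝ)
    (hF : ∀ a b, F a b = (Φ a) (X (Φ b)))
    (hFG : F * G = 1) (hGF : G * F = 1) :
    (∀ v : V, ω v v + ∑ a, ∑ b, G a b * Φ a v * Φ b v = 0) ∧
    (∀ v : V,
      (∀ v' : V, ω v v' + ∑ a, ∑ b, G a b * Φ a v * Φ b v' = 0) ↔
        v ∈ Submodule.span ℝ (Set.range fun a => X (Φ a))) := by
  -- ω is antisymmetric
  have hanti : ∀ v w : V, ω v w = - ω w v := by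
    intro v w
    have h := halt (v + w)
    simp only [map_add, LinearMap.add_apply, halt v, halt w] at h
    linarith
  -- F is antisymmetric
  have hFanti : ∀ a b, F a b = - F b a := by
    intro a b
    rw [hF, hF, ← hX (Φ a) (X (Φ b)), ← hX (Φ b) (X (Φ a))]
    exact hanti _ _
  have hFT : F.transpose = -F := by
    ext a b
    simp only [Matrix.transpose_apply, Matrix.neg_apply]
    exact hFanti b a
  -- G is antisymmetric
  have hGT : G.transpose = -G := by
    have h1 : F.transpose * (-G) = 1 := by
      rw [hFT, Matrix.neg_mul, Matrix.mul_neg, neg_neg, hFG]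
    have h2 : G.transpose * F.transpose = 1 := by
      rw [← Matrix.transpose_mul, hFG, Matrix.transpose_one]
    calc G.transpose = G.transpose * (F.transpose * -G) := by rw [h1, Matrix.mul_one]
      _ = (G.transpose * F.transpose) * -G := by rw [Matrix.mul_assoc]
      _ = -G := by rw [h2, Matrix.one_mul]
  have hGanti : ∀ a b, G a b = - G b a := by
    intro a b
    have := congrFun (congrFun hGT b) a
    simpa [Matrix.transpose_apply, Matrix.neg_apply] using this
  -- the quadratic form of G vanishes
  have hS : ∀ x : Fin d → ℝ, ∑ a, ∑ b, G a b * x a * x b = 0 := by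
    intro x
    have h1 : ∑ a, ∑ b, G a b * x a * x b = ∑ b, ∑ a, G a b * x a * x b :=
      Finset.sum_comm
    have h2 : (∑ b, ∑ a, G a b * x a * x b) = -∑ a, ∑ b, G a b * x a * x b := by
      rw [← Finset.sum_neg_distrib]
      apply Finset.sum_congr rfl
      intro b _
      rw [← Finset.sum_neg_distrib]
      apply Finset.sum_congr rfl
      intro a _
      rw [hGanti a b]
      ring
    linarith [h1.trans h2]
  -- the generators are in the kernel
  have hgen : ∀ c : Fin d, ∀ v' : V,
      ω (X (Φ c)) v' + ∑ a, ∑ b, G a b * Φ a (X (Φ c)) * Φ b v' = 0 := by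
    intro c v'
    have hkey : ∀ b, (∑ a, G a b * F a c) = -(if b = c then (1:ℝ) else 0) := by
      intro b
      have hbc := congrFun (congrFun hGF b) c
      rw [Matrix.mul_apply, Matrix.one_apply] at hbc
      rw [← hbc, ← Finset.sum_neg_distrib]
      apply Finset.sum_congr rfl
      intro a _
      rw [hGanti a b]
      ring
    have hsum : ∑ a, ∑ b, G a b * Φ a (X (Φ c)) * Φ b v' = -Φ c v' := by
      rw [Finset.sum_comm]
      have h3 : ∀ b, (∑ a, G a b * Φ a (X (Φ c)) * Φ b v')
          = (-(if b = c then (1:ℝ) else 0)) * Φ b v' := by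
        intro b
        rw [← hkey b, Finset.sum_mul]
        apply Finset.sum_congr rfl
        intro a _
        rw [hF]
      rw [Finset.sum_congr rfl fun b _ => h3 b]
      simp
    rw [hsum, hX]
    ring
  constructor
  · intro v
    rw [halt v, hS fun a => Φ a v]
    ring
  · intro v
    constructor
    · -- kernel ⊆ span
      intro hv
      have h0 : ∀ v', ω (v - ∑ b, (-∑ a, G a b * Φ a v) • X (Φ b)) v' = 0 := by
        intro v'
        have h1 := hv v'
        have h2 : ∑ a, ∑ b, G a b * Φ a v * Φ b v'
            = ∑ b, (∑ a, G a b * Φ a v) * Φ b v' := by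
          rw [Finset.sum_comm]
          apply Finset.sum_congr rfl
          intro b _
          rw [Finset.sum_mul]
        simp only [map_sub, map_sum, map_smul, LinearMap.sub_apply,
          LinearMap.sum_apply, LinearMap.smul_apply, smul_eq_mul, hX, neg_mul,
          Finset.sum_neg_distrib, sub_neg_eq_add]
        rw [← h2]
        linarith
      have hvw := hnd _ h0
      have : v = ∑ b, (-∑ a, G a b * Φ a v) • X (Φ b) := by
        rw [← sub_eq_zero]; exact hvw
      rw [this]
      exact Submodule.sum_mem _ fun b _ =>
        Submodule.smul_mem _ _ (Submodule.subset_span ⟨b, rfl⟩)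
    · -- span ⊆ kernel
      intro hv
      induction hv using Submodule.span_induction with
      | mem x hx =>
        obtain ⟨c, rfl⟩ := hx
        exact hgen c
      | zero => intro v'; simp
      | add u w _ _ hu hw =>
        intro v'
        have h1 := hu v'
        have h2 := hw v'
        have h3 : ∑ a, ∑ b, G a b * Φ a (u + w) * Φ b v'
            = (∑ a, ∑ b, G a b * Φ a u * Φ b v')
              + ∑ a, ∑ b, G a b * Φ a w * Φ b v' := by
          rw [← Finset.sum_add_distrib]
          apply Finset.sum_congr rfl
          intro a _
          rw [← Finset.sum_add_distrib]
          apply Finset.sum_congr rfl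
          intro b _
          simp only [map_add]
          ring
        rw [h3]
        simp only [map_add, LinearMap.add_apply]
        linarith
      | smul r u _ hu =>
        intro v'
        have h1 := hu v'
        have h3 : ∑ a, ∑ b, G a b * Φ a (r • u) * Φ b v'
            = r * ∑ a, ∑ b, G a b * Φ a u * Φ b v' := by
          rw [Finset.mul_sum]
          apply Finset.sum_congr rfl
          intro a _
          rw [Finset.mul_sum]
          apply Finset.sum_congr rfl
          intro b _
          simp only [map_smul, smul_eq_mul]
          ring
        rw [h3]
        simp only [map_smul, LinearMap.smul_apply, smul_eq_mul]
        rw [← mul_add, h1, mul_zero]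
end

section
/- In the second class setting, with ω̄(v, v') := ω(v, v') + Σ_{a,b} G_{ab} Φ^a(v) Φ^b(v'), define on the extended space Ṽ := V × ℝ^d the bilinear form ω̃((v, p), (v', p')) := ω̄(v, v') + Σ_a ( Φ^a(v) p'_a − Φ^a(v') p_a ). Then ω̃ is an alternating and nondegenerate bilinear form on Ṽ. (The pointwise content, at points of the embedded original phase space, of the paper's Lemma that ω̃₂ = p₁*ω̄ + dΦ^α ∧ dπ_α is a symplectic form on the extended phase space M̃₂ = M ⊕ P̄ ⊕ T*P.) -/
/-- In the second class setting, with
`ω̄(v, v') := ω(v, v') + Σ_{a,b} G a b * Φ a v * Φ b v'`, the bilinear form on the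
extended space `Ṽ = V × ℝ^d` given by
`ω̃((v,p),(v',p')) := ω̄(v,v') + Σ_a (Φ a v * p' a − Φ a v' * p a)`
is alternating and nondegenerate. -/
theorem extended_form_alternating_and_nondegenerate
    (V : Type*) [AddCommGroup V] [Module ℝ V] [FiniteDimensional ℝ V]
    (ω : V →ₗ[ℝ] V →ₗ[ℝ] ℝ)
    (halt : ∀ v, ω v v = 0)
    (hnd : ∀ v, (∀ w, ω v w = 0) → v = 0)
    (X : Module.Dual ℝ V → V) (hX : ∀ α w, ω (X α) w = α w)
    (d : ℕ) (Φ : Fin d → Module.Dual ℝ V) (hΦ : LinearIndependent ℝ Φ)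
    (F G : Matrix (Fin d) (Fin d) ℝ)
    (hF : ∀ a b, F a b = (Φ a) (X (Φ b)))
    (hFG : F * G = 1) (hGF : G * F = 1)
    (ωt : (V × (Fin d → ℝ)) → (V × (Fin d → ℝ)) → ℝ)
    (hωt : ∀ z z' : V × (Fin d → ℝ),
      ωt z z' = ω z.1 z'.1 + ∑ a, ∑ b, G a b * Φ a z.1 * Φ b z'.1 +
        ∑ a, (Φ a z.1 * z'.2 a - Φ a z'.1 * z.2 a)) :
    (∀ z, ωt z z = 0) ∧
    (∀ z, (∀ z', ωt z z' = 0) → z = 0) := by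
  -- antisymmetry of ω
  have hanti : ∀ v w, ω v w = - ω w v := by
    intro v w
    have h := halt (v + w)
    simp only [map_add, LinearMap.add_apply, halt] at h
    linarith
  -- F antisymmetric
  have hFanti : ∀ a b, F a b = - F b a := by
    intro a b
    have h1 : F a b = ω (X (Φ a)) (X (Φ b)) := by rw [hX]; exact hF a b
    have h2 : F b a = ω (X (Φ b)) (X (Φ a)) := by rw [hX]; exact hF b a
    rw [h1, h2, hanti]
  -- G antisymmetric
  have hGanti : ∀ a b, G a b = - G b a := by
    have hFt : F.transpose = -F := by
      ext a b
      rw [Matrix.transpose_apply, Matrix.neg_apply]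
      exact hFanti b a
    have h1 : G.transpose * F = -1 := by
      calc G.transpose * F = G.transpose * (-F.transpose) := by rw [hFt]; simp
        _ = -(G.transpose * F.transpose) := by noncomm_ring
        _ = -(F * G).transpose := by rw [Matrix.transpose_mul]
        _ = -1 := by rw [hFG, Matrix.transpose_one]
    have h2 : G.transpose = -G := by
      calc G.transpose = G.transpose * (F * G) := by rw [hFG, Matrix.mul_one]
        _ = (G.transpose * F) * G := by rw [Matrix.mul_assoc]
        _ = -G := by rw [h1]; simp
    intro a b
    have := congrFun (congrFun h2 b) a
    simpa [Matrix.transpose_apply] using this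
  constructor
  · -- alternating
    intro z
    rw [hωt, halt]
    have hsum : (∑ a, ∑ b, G a b * Φ a z.1 * Φ b z.1) = 0 := by
      have hswap : (∑ a, ∑ b, G a b * Φ a z.1 * Φ b z.1)
          = ∑ a, ∑ b, G b a * Φ b z.1 * Φ a z.1 := Finset.sum_comm
      have : (∑ a, ∑ b, G a b * Φ a z.1 * Φ b z.1)
          = - ∑ a, ∑ b, G a b * Φ a z.1 * Φ b z.1 := by
        nth_rewrite 2 [hswap]
        rw [← Finset.sum_neg_distrib]
        apply Finset.sum_congr rfl
        intro a _
        rw [← Finset.sum_neg_distrib]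
        apply Finset.sum_congr rfl
        intro b _
        rw [hGanti a b]; ring
      linarith
    simp [hsum]
  · -- nondegenerate
    rintro ⟨v, p⟩ h
    -- step 1: Φ a v = 0
    have hΦv : ∀ a, Φ a v = 0 := by
      intro a
      have := h (0, Pi.single a 1)
      rw [hωt] at this
      simpa [Finset.mul_sum, Pi.single_apply] using this
    -- step 2: ω v w = ∑ a, Φ a w * p a
    have hωv : ∀ w, ω v w = ∑ a, p a * Φ a w := by
      intro w
      have := h (w, 0)
      rw [hωt] at this
      simp only [hΦv, zero_mul, mul_zero, Finset.sum_const_zero, Pi.zero_apply,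
        zero_sub, Finset.sum_neg_distrib, add_zero] at this
      have := sub_eq_zero.mp (by linarith [this] : ω v w - ∑ a, Φ a w * p a = 0)
      rw [this]
      exact Finset.sum_congr rfl fun a _ => mul_comm _ _
    -- step 4: p = 0
    have hpF : ∀ b, ∑ a, p a * F a b = 0 := by
      intro b
      have h1 : ω (X (Φ b)) v = Φ b v := hX _ _
      rw [hΦv b, hanti, hωv] at h1
      have h2 : ∑ a, p a * F a b = ∑ a, p a * Φ a (X (Φ b)) := by
        exact Finset.sum_congr rfl fun a _ => by rw [hF]
      rw [h2]; linarith
    have hp : p = 0 := by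
      have hv : Matrix.vecMul p F = 0 := by
        funext b
        simpa [Matrix.vecMul, dotProduct] using hpF b
      have : Matrix.vecMul (Matrix.vecMul p F) G = p := by
        rw [Matrix.vecMul_vecMul, hFG, Matrix.vecMul_one]
      rw [hv] at this
      simpa [Matrix.zero_vecMul] using this.symm
    -- step 3 & finish: v = 0
    have hv : v = 0 := by
      apply hnd
      intro w
      rw [hωv, hp]
      simp
    simp [hv, hp]
end

section
/- Let (V₁, ω₁) and (V₂, ω₂) be finite-dimensional real symplectic vector spaces with Poisson bivectors Π₁ and Π₂, and let g : V₁ → V₂ be a linear map. Then g is Poisson, i.e. Π₂(α, β) = Π₁(α ∘ g, β ∘ g) for all α, β ∈ V₂*, if and only if its graph Γ := {(v, g v) : v ∈ V₁} is coisotropic in V₁ × V₂ equipped with the difference form ω((v, w), (v', w')) := ω₁(v, v') − ω₂(w, w'), i.e. Γ^⊥ ⊆ Γ with respect to this form. (The linear content of the paper's Lemma 1: a map between Poisson manifolds is Poisson if and only if its graph is coisotropic in M₁ × M̄₂.) -/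
/-- A linear map `g : V₁ → V₂` between finite-dimensional real
symplectic vector spaces (with Hamiltonian-vector maps `X₁, X₂` and Poisson
bivectors `Πᵢ(α,β) = α (Xᵢ β)`) is Poisson, i.e.
`Π₂(α, β) = Π₁(α ∘ g, β ∘ g)`, if and only if its graph is coisotropic in
`V₁ × V₂` equipped with the difference form `ω₁ ⊖ ω₂`. -/
theorem linear_map_poisson_iff_graph_coisotropic
    (V₁ V₂ : Type*) [AddCommGroup V₁] [Module ℝ V₁] [FiniteDimensional ℝ V₁]
    [AddCommGroup V₂] [Module ℝ V₂] [FiniteDimensional ℝ V₂]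
    (ω₁ : V₁ →ₗ[ℝ] V₁ →ₗ[ℝ] ℝ)
    (h1alt : ∀ v, ω₁ v v = 0)
    (h1nd : ∀ v, (∀ w, ω₁ v w = 0) → v = 0)
    (ω₂ : V₂ →ₗ[ℝ] V₂ →ₗ[ℝ] ℝ)
    (h2alt : ∀ v, ω₂ v v = 0)
    (h2nd : ∀ v, (∀ w, ω₂ v w = 0) → v = 0)
    (X₁ : Module.Dual ℝ V₁ → V₁) (hX₁ : ∀ α w, ω₁ (X₁ α) w = α w)
    (X₂ : Module.Dual ℝ V₂ → V₂) (hX₂ : ∀ α w, ω₂ (X₂ α) w = α w)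
    (g : V₁ →ₗ[ℝ] V₂) :
    (∀ α β : Module.Dual ℝ V₂, α (X₂ β) = (α ∘ₗ g) (X₁ (β ∘ₗ g))) ↔
    {z : V₁ × V₂ | ∀ z' ∈ {w : V₁ × V₂ | w.2 = g w.1},
        ω₁ z.1 z'.1 - ω₂ z.2 z'.2 = 0} ⊆
      {w : V₁ × V₂ | w.2 = g w.1} := by
  constructor
  · intro hP z hz
    obtain ⟨u, w⟩ := z
    simp only [Set.mem_setOf_eq] at hz ⊢
    have key : ∀ v : V₁, ω₁ u v = ω₂ w (g v) := by
      intro v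
      have := hz (v, g v) rfl
      simpa [sub_eq_zero] using this
    set β : Module.Dual ℝ V₂ := ω₂ w with hβ
    have hXβ : X₂ β = w := by
      have : ∀ y, ω₂ (X₂ β - w) y = 0 := by
        intro y
        simp [hX₂, hβ, sub_eq_zero]
      exact sub_eq_zero.mp (h2nd _ this)
    have hXβg : X₁ (β ∘ₗ g) = u := by
      have : ∀ y, ω₁ (X₁ (β ∘ₗ g) - u) y = 0 := by
        intro y
        simp [hX₁, (key y).symm, sub_eq_zero]
      exact sub_eq_zero.mp (h1nd _ this)
    have : ∀ φ : Module.Dual ℝ V₂, φ (w - g u) = 0 := by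
      intro φ
      have := hP φ β
      rw [hXβ, hXβg] at this
      simp [this]
    exact sub_eq_zero.mp ((Module.forall_dual_apply_eq_zero_iff ℝ _).mp this)
  · intro hC α β
    have hmem : (X₁ (β ∘ₗ g), X₂ β) ∈
        {z : V₁ × V₂ | ∀ z' ∈ {w : V₁ × V₂ | w.2 = g w.1},
          ω₁ z.1 z'.1 - ω₂ z.2 z'.2 = 0} := by
      intro z' hz'
      simp only [Set.mem_setOf_eq] at hz'
      simp [hX₁, hX₂, hz', sub_eq_zero]
    have := hC hmem
    simp only [Set.mem_setOf_eq] at this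
    simp [this]
end

section
/- Let n ≥ 1 be a natural number and let (q, p) ∈ ℝ² with (q, p) ≠ (0, 0). Set r := √(q² + p²) and define f(q, p) := r · T_n(q/r) − 1 and g(q, p) := p · U_{n−1}(q/r), where T_n and U_{n−1} are the Chebyshev polynomials of the first and second kind. Then f and g are differentiable at (q, p) and their canonical Poisson bracket equals n: (∂f/∂q)(q,p) · (∂g/∂p)(q,p) − (∂f/∂p)(q,p) · (∂g/∂q)(q,p) = n. (The bracket computation {Φ¹_n, Φ²_n} = n of the paper's Example 1 on the punctured plane.) -/
/-!
For polynomials `P`, `Q`, the chain rule gives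
`{r · P(q/r), p · Q(q/r)} = (X P Q + (1 - X²) W(Q, P))(q/r)` with `W` the Wronskian, because
`∂_q r = q/r`, `∂_p r = p/r` and `r² = q² + p²`. For `P = T_n`, `Q = U_{n-1}` this polynomial is
the constant `n`: substitute `T_n' = n U_{n-1}` and `n T_n = X U_{n-1} - (1 - X²) U_{n-1}'`, and
use the Pell identity `T_n² + (1 - X²) U_{n-1}² = 1`.
-/

open Polynomial ContinuousLinearMap

namespace Polynomial.Chebyshev

variable (R : Type*) [CommRing R]

theorem T_sq_add_one_sub_X_sq_mul_U_sq (n : ℤ) :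
    T R n ^ 2 + (1 - X ^ 2) * U R (n - 1) ^ 2 = 1 := by
  have h := congrArg (·.comp (2 * X)) (S_sq_add_S_sq R (n - 1))
  simp only [sub_comp, add_comp, pow_comp, mul_comp, X_comp, one_comp, S_comp_two_mul_X,
    sub_add_cancel] at h
  rw [T_eq_U_sub_X_mul_U]
  linear_combination h

theorem X_mul_T_mul_U_add_one_sub_X_sq_mul_wronskian (n : ℤ) :
    X * T R n * U R (n - 1) + (1 - X ^ 2) * wronskian (U R (n - 1)) (T R n) = (n : R[X]) := by
  have hU := add_one_mul_T_eq_poly_in_U (R := R) (n - 1)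
  rw [sub_add_cancel] at hU
  push_cast at hU
  rw [wronskian, T_derivative_eq_U]
  linear_combination -T R n * hU + (n : R[X]) * T_sq_add_one_sub_X_sq_mul_U_sq R n

end Polynomial.Chebyshev

noncomputable section

def polarRadius (x : ℝ × ℝ) : ℝ := √(x.1 ^ 2 + x.2 ^ 2)

def polarCos (x : ℝ × ℝ) : ℝ := x.1 / polarRadius x

def poissonBracket (f g : ℝ × ℝ → ℝ) (x : ℝ × ℝ) : ℝ :=
  fderiv ℝ f x (1, 0) * fderiv ℝ g x (0, 1) - fderiv ℝ f x (0, 1) * fderiv ℝ g x (1, 0)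

end

theorem poissonBracket_sub_const_left (f g : ℝ × ℝ → ℝ) (c : ℝ) (x : ℝ × ℝ) :
    poissonBracket (fun y => f y - c) g x = poissonBracket f g x := by
  simp only [poissonBracket, fderiv_sub_const]

section PuncturedPlane

variable {x : ℝ × ℝ}

theorem polarRadius_sq (x : ℝ × ℝ) : polarRadius x ^ 2 = x.1 ^ 2 + x.2 ^ 2 :=
  Real.sq_sqrt (by positivity)

theorem polarRadius_pos (hx : x ≠ 0) : 0 < polarRadius x := by
  refine Real.sqrt_pos.2 (lt_of_le_of_ne (by positivity) (Ne.symm fun h => hx ?_))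
  obtain ⟨q, p⟩ := x
  have hq : q = 0 := by nlinarith [sq_nonneg q, sq_nonneg p]
  have hp : p = 0 := by nlinarith [sq_nonneg q, sq_nonneg p]
  simp [hq, hp]

theorem hasFDerivAt_polarRadius (hx : x ≠ 0) :
    HasFDerivAt polarRadius
      ((x.1 / polarRadius x) • fst ℝ ℝ ℝ + (x.2 / polarRadius x) • snd ℝ ℝ ℝ) x := by
  have hr := polarRadius_pos hx
  have hsq : HasFDerivAt (fun y : ℝ × ℝ => y.1 ^ 2 + y.2 ^ 2) _ x :=
    (hasFDerivAt_fst.pow 2).add ((hasFDerivAt_snd (𝕜 := ℝ)).pow 2)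
  refine (hsq.sqrt (polarRadius_sq x ▸ pow_pos hr 2).ne').congr_fderiv (ext fun v => ?_)
  simp only [← polarRadius.eq_1, add_apply, smul_apply, coe_fst', coe_snd', smul_eq_mul, nsmul_eq_mul,
    Nat.cast_ofNat, Nat.add_one_sub_one, pow_one]
  field_simp

theorem hasFDerivAt_polarCos (hx : x ≠ 0) :
    HasFDerivAt polarCos ((x.2 ^ 2 / polarRadius x ^ 3) • fst ℝ ℝ ℝ -
      (x.1 * x.2 / polarRadius x ^ 3) • snd ℝ ℝ ℝ) x := by
  have hr := polarRadius_pos hx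
  have hinv := (hasDerivAt_inv hr.ne').comp_hasFDerivAt x (hasFDerivAt_polarRadius hx)
  refine (hasFDerivAt_fst.mul hinv).congr_fderiv (ext fun v => ?_)
  simp only [add_apply, sub_apply, smul_apply, coe_fst', coe_snd', smul_eq_mul,
    Function.comp_apply]
  field_simp
  linear_combination v.1 * polarRadius_sq x

theorem poissonBracket_polarRadius_mul_eval_snd_mul_eval (P Q : ℝ[X]) (hx : x ≠ 0) :
    poissonBracket (fun y => polarRadius y * P.eval (polarCos y))
        (fun y => y.2 * Q.eval (polarCos y)) x =
      (X * P * Q + (1 - X ^ 2) * wronskian Q P).eval (polarCos x) := by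
  have hr := polarRadius_pos hx
  have hc := hasFDerivAt_polarCos hx
  have hF : HasFDerivAt (fun y => polarRadius y * P.eval (polarCos y)) _ x :=
    (hasFDerivAt_polarRadius hx).mul ((P.hasDerivAt _).comp_hasFDerivAt x hc)
  have hG : HasFDerivAt (fun y => y.2 * Q.eval (polarCos y)) _ x :=
    hasFDerivAt_snd.mul ((Q.hasDerivAt _).comp_hasFDerivAt x hc)
  rw [poissonBracket, hF.fderiv, hG.fderiv]
  simp only [add_apply, sub_apply, smul_apply, coe_fst', coe_snd', smul_eq_mul, wronskian,
    eval_add, eval_sub, eval_mul, eval_pow, eval_X, eval_one]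
  generalize P.eval (polarCos x) = a, (derivative P).eval (polarCos x) = a',
    Q.eval (polarCos x) = b, (derivative Q).eval (polarCos x) = b'
  rw [polarCos]
  field_simp
  linear_combination (polarRadius x * x.2 ^ 2 * a * b' - polarRadius x ^ 3 * (a' * b - a * b')) *
    polarRadius_sq x

end PuncturedPlane

theorem chebyshev_constraints_poisson_bracket_general
    (n : ℕ) (q p : ℝ) (hqp : (q, p) ≠ ((0 : ℝ), (0 : ℝ)))
    (f g : ℝ × ℝ → ℝ)
    (hf : f = fun x : ℝ × ℝ =>
      Real.sqrt (x.1 ^ 2 + x.2 ^ 2) *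
        (Polynomial.Chebyshev.T ℝ (n : ℤ)).eval
          (x.1 / Real.sqrt (x.1 ^ 2 + x.2 ^ 2)) - 1)
    (hg : g = fun x : ℝ × ℝ =>
      x.2 *
        (Polynomial.Chebyshev.U ℝ ((n : ℤ) - 1)).eval
          (x.1 / Real.sqrt (x.1 ^ 2 + x.2 ^ 2))) :
    DifferentiableAt ℝ f (q, p) ∧ DifferentiableAt ℝ g (q, p) ∧
    fderiv ℝ f (q, p) (1, 0) * fderiv ℝ g (q, p) (0, 1) -
        fderiv ℝ f (q, p) (0, 1) * fderiv ℝ g (q, p) (1, 0) = n := by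
  subst hf hg
  set T := Chebyshev.T ℝ (n : ℤ)
  set U := Chebyshev.U ℝ ((n : ℤ) - 1)
  change DifferentiableAt ℝ (fun y => polarRadius y * T.eval (polarCos y) - 1) (q, p) ∧
    DifferentiableAt ℝ (fun y => y.2 * U.eval (polarCos y)) (q, p) ∧
    poissonBracket (fun y => polarRadius y * T.eval (polarCos y) - 1)
      (fun y => y.2 * U.eval (polarCos y)) (q, p) = n
  have hc := (hasFDerivAt_polarCos hqp).differentiableAt
  refine ⟨((hasFDerivAt_polarRadius hqp).differentiableAt.mul
      ((T.differentiable _).comp _ hc)).sub_const 1,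
    differentiableAt_snd.mul ((U.differentiable _).comp _ hc), ?_⟩
  rw [poissonBracket_sub_const_left, poissonBracket_polarRadius_mul_eval_snd_mul_eval _ _ hqp,
    Chebyshev.X_mul_T_mul_U_add_one_sub_X_sq_mul_wronskian]
  simp

/-- For `n ≥ 1` and `(q, p) ≠ (0, 0)` in `ℝ²`, with
`r := √(q² + p²)`, the functions `f(q,p) = r * T_n(q/r) − 1` and
`g(q,p) = p * U_{n−1}(q/r)` (Chebyshev polynomials of the first and second kind)
are differentiable at `(q, p)` and their canonical Poisson bracket equals `n`:
`∂f/∂q ∂g/∂p − ∂f/∂p ∂g/∂q = n`. -/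
theorem chebyshev_constraints_poisson_bracket
    (n : ℕ) (hn : 1 ≤ n) (q p : ℝ) (hqp : (q, p) ≠ ((0 : ℝ), (0 : ℝ)))
    (f g : ℝ × ℝ → ℝ)
    (hf : f = fun x : ℝ × ℝ =>
      Real.sqrt (x.1 ^ 2 + x.2 ^ 2) *
        (Polynomial.Chebyshev.T ℝ (n : ℤ)).eval
          (x.1 / Real.sqrt (x.1 ^ 2 + x.2 ^ 2)) - 1)
    (hg : g = fun x : ℝ × ℝ =>
      x.2 *
        (Polynomial.Chebyshev.U ℝ ((n : ℤ) - 1)).eval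
          (x.1 / Real.sqrt (x.1 ^ 2 + x.2 ^ 2))) :
    DifferentiableAt ℝ f (q, p) ∧ DifferentiableAt ℝ g (q, p) ∧
    fderiv ℝ f (q, p) (1, 0) * fderiv ℝ g (q, p) (0, 1) -
        fderiv ℝ f (q, p) (0, 1) * fderiv ℝ g (q, p) (1, 0) = n :=
  chebyshev_constraints_poisson_bracket_general n q p hqp f g hf hg
end
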